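/- arXiv:2010.00930 — 2 statements merged into one kernel-verified Lean document; each statement's English description precedes it below -/
import Mathlib

section
/- Let A_S be the n-dimensional Ish arrangement, i.e. the hyperplane arrangement in ℝ^n consisting of the hyperplanes x_i − x_j = 0 for all 1 ≤ i < j ≤ n together with the hyperplanes x_1 − x_j = s for all 1 < j ≤ n and s ∈ {1, …, j−1}. Then the number of regions of A_S (connected components of the complement in ℝ^n of the union of its hyperplanes) equals the Cayley number (n+1)^(n−1). -/
open scoped Classical

/-- The derived sets `S⁻ᵢⱼ` of nonnegative integers:
for `i < j`, `S⁻ᵢⱼ = {s ≥ 0 : -s ∈ Sᵢⱼ}`, and `S⁻ⱼᵢ = {0} ∪ {s > 0 : s ∈ Sᵢⱼ}`. -/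
def Sminus {n : ℕ} (S : Fin n → Fin n → Finset ℤ) (i j : Fin n) : Set ℕ :=
  if i < j then {s : ℕ | -(s : ℤ) ∈ S i j}
  else {0} ∪ {s : ℕ | 0 < s ∧ (s : ℤ) ∈ S j i}

/-- `m`: the maximal absolute value of an element of some `S i j` (`i < j`). -/
def mOf {n : ℕ} (S : Fin n → Fin n → Finset ℤ) : ℕ :=
  Finset.univ.sup fun p : Fin n × Fin n =>
    if p.1 < p.2 then (S p.1 p.2).sup (fun s => s.natAbs) else 0

/-- A rooted labeled plane tree with `n` nodes (labeled by `Fin n`, index `i` representing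
the label `i+1`, so the node `1` is `(0 : Fin n)`), each node having exactly `m+1`
linearly ordered children; children that are not nodes are unlabeled leaves and carry no
further data. `parent v` is the parent node of the node `v` (with the convention
`parent root = root`), and `pos v` is the position of `v` among the `m+1` children of its
parent, so `(pos v : ℕ)` is the number `lsib v` of left siblings of `v`. -/
structure PlaneTree (n m : ℕ) where
  root : Fin n
  parent : Fin n → Fin n
  pos : Fin n → Fin (m + 1)
  parent_root : parent root = root
  reaches_root : ∀ v : Fin n, ∃ k : ℕ, parent^[k] v = root
  pos_inj : ∀ v w : Fin n, v ≠ root → w ≠ root → parent v = parent w → pos v = pos w → v = w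

namespace PlaneTree

variable {n m : ℕ}

/-- `v` is a child of `u` (among the nodes). -/
def IsChild (T : PlaneTree n m) (v u : Fin n) : Prop :=
  v ≠ T.root ∧ T.parent v = u

/-- `v` is the cadet of `u`: the rightmost child of `u` that is a node. -/
def IsCadet (T : PlaneTree n m) (u v : Fin n) : Prop :=
  T.IsChild v u ∧ ∀ w : Fin n, T.IsChild w u → T.pos w ≤ T.pos v

/-- The number of left siblings of `v`. -/
def lsib (T : PlaneTree n m) (v : Fin n) : ℕ := (T.pos v : ℕ)

end PlaneTree

/-- `(v a, v (a+1), …, v b)` is a cadet sequence of `T` (1-indexed, `1 ≤ a ≤ b`). -/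
def IsCadetWindow {n m : ℕ} (T : PlaneTree n m) (v : ℕ → Fin n) (a b : ℕ) : Prop :=
  1 ≤ a ∧ a ≤ b ∧ ∀ p : ℕ, a < p → p ≤ b → T.IsCadet (v (p - 1)) (v p)

/-- `v` is injective on the indices `a, …, b`. -/
def WindowInj {n : ℕ} (v : ℕ → Fin n) (a b : ℕ) : Prop :=
  ∀ p q : ℕ, a ≤ p → p ≤ b → a ≤ q → q ≤ b → v p = v q → p = q

/-- `(v a, …, v b)` is an `S`-cadet sequence of `T`. -/
def IsSCadetWindow {n m : ℕ} (S : Fin n → Fin n → Finset ℤ) (T : PlaneTree n m)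
    (v : ℕ → Fin n) (a b : ℕ) : Prop :=
  IsCadetWindow T v a b ∧
    ∀ i j : ℕ, a ≤ i → i < j → j ≤ b →
      (∑ p ∈ Finset.Icc (i + 1) j, T.lsib (v p)) ∉ Sminus S (v i) (v j)

/-- `(v 1, …, v k)` is a maximal cadet sequence of `T`: all children of `v k` are
leaves, and no node has `v 1` as its cadet. -/
def IsMaxCadetSeq {n m : ℕ} (T : PlaneTree n m) (k : ℕ) (v : ℕ → Fin n) : Prop :=
  IsCadetWindow T v 1 k ∧ (∀ w : Fin n, ¬ T.IsChild w (v k)) ∧ ∀ u : Fin n, ¬ T.IsCadet u (v 1)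

/-- `(v a, …, v b)` is a maximal `S`-cadet sequence inside the ambient cadet sequence
`(v 1, …, v k)`. -/
def IsMaxSCadetWindow {n m : ℕ} (S : Fin n → Fin n → Finset ℤ) (T : PlaneTree n m)
    (k : ℕ) (v : ℕ → Fin n) (a b : ℕ) : Prop :=
  b ≤ k ∧ IsSCadetWindow S T v a b ∧
    (a = 1 ∨ ¬ IsSCadetWindow S T v (a - 1) b) ∧
    (b = k ∨ ¬ IsSCadetWindow S T v a (b + 1))

/-- `Y` is (the set of nodes of) a maximal `S`-cadet sequence of `T`. -/
def IsMaxSCadetSet {n m : ℕ} (S : Fin n → Fin n → Finset ℤ) (T : PlaneTree n m)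
    (Y : Finset (Fin n)) : Prop :=
  ∃ (k : ℕ) (v : ℕ → Fin n) (a b : ℕ), IsMaxCadetSeq T k v ∧ WindowInj v 1 k ∧
    IsMaxSCadetWindow S T k v a b ∧ Y = (Finset.Icc a b).image v

/-- `Y` is (the set of nodes of) a nonempty cadet sequence of `T`. -/
def IsCadetSeqSet {n m : ℕ} (T : PlaneTree n m) (Y : Finset (Fin n)) : Prop :=
  ∃ (k : ℕ) (v : ℕ → Fin n), IsCadetWindow T v 1 k ∧ WindowInj v 1 k ∧
    Y = (Finset.Icc 1 k).image v

/-- `X` is (the set of nodes of) an `S`-connected cadet sequence of `T`: it is a cadet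
sequence, every maximal `S`-cadet sequence is disjoint from it or contained in it, and no
cadet sequence with this property is properly contained in it. -/
def SConnected {n m : ℕ} (S : Fin n → Fin n → Finset ℤ) (T : PlaneTree n m)
    (X : Finset (Fin n)) : Prop :=
  IsCadetSeqSet T X ∧
    (∀ Y, IsMaxSCadetSet S T Y → X ∩ Y = ∅ ∨ Y ⊆ X) ∧
    ∀ X', IsCadetSeqSet T X' → (∀ Y, IsMaxSCadetSet S T Y → X' ∩ Y = ∅ ∨ Y ⊆ X') →
      X' ⊆ X → X' = X

/-- `Y` is (the set of nodes of) an `S`-cadet sequence of `T` (a possible box). -/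
def IsSBox {n m : ℕ} (S : Fin n → Fin n → Finset ℤ) (T : PlaneTree n m)
    (Y : Finset (Fin n)) : Prop :=
  ∃ (k : ℕ) (v : ℕ → Fin n), IsSCadetWindow S T v 1 k ∧ WindowInj v 1 k ∧
    Y = (Finset.Icc 1 k).image v

/-- `B` is an `S`-boxing of the set of nodes `X`: a partition of `X` into
`S`-cadet sequences. -/
def IsSBoxingOf {n m : ℕ} (S : Fin n → Fin n → Finset ℤ) (T : PlaneTree n m)
    (X : Finset (Fin n)) (B : Finset (Finset (Fin n))) : Prop :=
  (∀ Y ∈ B, IsSBox S T Y ∧ Y ⊆ X) ∧ ∀ u ∈ X, ∃! Y, Y ∈ B ∧ u ∈ Y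

/-- The contribution `r_S(X)` of a cadet sequence with (injective) node set `X`
(whose length is `X.card`): `∑_{B ∈ U_S(X)} (-1)^(|X| - |B|)`. -/
noncomputable def contrib {n m : ℕ} (S : Fin n → Fin n → Finset ℤ) (T : PlaneTree n m)
    (X : Finset (Fin n)) : ℤ :=
  ∑ B : Finset (Finset (Fin n)),
    if IsSBoxingOf S T X B then (-1 : ℤ) ^ (X.card - B.card) else 0

/-- The contribution `r_S(T) = ∑_{B ∈ U_S(T)} (-1)^(n - |B|)` of the tree `T`. -/
noncomputable def treeContrib {n m : ℕ} (S : Fin n → Fin n → Finset ℤ)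
    (T : PlaneTree n m) : ℤ :=
  contrib S T Finset.univ

/-- The tuple `S` is transitive. -/
def TransitiveS {n : ℕ} (S : Fin n → Fin n → Finset ℤ) : Prop :=
  ∀ i j k : Fin n, i ≠ j → j ≠ k → i ≠ k →
    ∀ s t : ℕ, s ∉ Sminus S i j → t ∉ Sminus S j k → s + t ∉ Sminus S i k

/-- The arrangement `A_S` is almost transitive (`(i : ℕ) = 0` encodes "`i` is the node `1`"). -/
def AlmostTransitive {n : ℕ} (S : Fin n → Fin n → Finset ℤ) : Prop :=
  ∀ i j k : Fin n, i ≠ j → j ≠ k → i ≠ k → (i : ℕ) ≠ 0 → (k : ℕ) ≠ 0 →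
    ∀ s t : ℕ, s ∉ Sminus S i j → t ∉ Sminus S j k → s + t ∉ Sminus S i k

/-- `A_S` is an Ish-type arrangement: `0 ∈ Sᵢⱼ` for all `i < j`, and `Sᵢⱼ = {0}`
whenever `1 < i < j`. -/
def IshType {n : ℕ} (S : Fin n → Fin n → Finset ℤ) : Prop :=
  (∀ i j : Fin n, i < j → (0 : ℤ) ∈ S i j) ∧
    ∀ i j : Fin n, 0 < (i : ℕ) → i < j → S i j = {0}

/-- `A_S` is a nested Ish arrangement. -/
def NestedIsh {n : ℕ} (S : Fin n → Fin n → Finset ℤ) : Prop :=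
  IshType S ∧ ∀ i j k : Fin n, (i : ℕ) = 0 → 0 < (j : ℕ) → j < k → S i j ⊆ S i k

/-- The lower inefficiency `E_l(T)`: the number of lower inefficient nodes of `T`,
i.e. nodes `w` that are left siblings of the node `1` with `lsib w ∉ S⁻_{w,1}`. -/
noncomputable def Elow {n m : ℕ} [NeZero n] (S : Fin n → Fin n → Finset ℤ)
    (T : PlaneTree n m) : ℕ :=
  (Finset.univ.filter fun w : Fin n =>
    w ≠ T.root ∧ (0 : Fin n) ≠ T.root ∧ T.parent w = T.parent 0 ∧ T.pos w < T.pos 0 ∧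
      T.lsib w ∉ Sminus S w 0).card

/-- The upper inefficiency `E_u(T)`: the number of upper inefficient nodes of `T`,
i.e. nodes `w` with parent the node `1` that are not the cadet of `1`, with
`lsib w ∉ S⁻_{1,w}`. -/
noncomputable def Eup {n m : ℕ} [NeZero n] (S : Fin n → Fin n → Finset ℤ)
    (T : PlaneTree n m) : ℕ :=
  (Finset.univ.filter fun w : Fin n =>
    T.IsChild w 0 ∧ ¬ T.IsCadet 0 w ∧ T.lsib w ∉ Sminus S 0 w).card

/-- The class `S(e_l, ℓ_l, e_u, ℓ_u)` of trees in `T^(m)(n)` with nonzero contribution,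
lower/upper inefficiencies `e_l, e_u` and lower/upper 1-lengths `ℓ_l, ℓ_u` (the latter
expressed via the maximal `S`-cadet sequence `{v_{j-ℓ_l}, …, v_j, …, v_{j+ℓ_u}}`
around the node `1 = v j` inside its maximal cadet sequence `(v 1, …, v t)`). -/
def ClassS {n : ℕ} [NeZero n] (S : Fin n → Fin n → Finset ℤ) (el ll eu lu : ℕ) :
    Set (PlaneTree n (mOf S)) :=
  {T | treeContrib S T ≠ 0 ∧ Elow S T = el ∧ Eup S T = eu ∧
    ∃ (t : ℕ) (v : ℕ → Fin n) (j : ℕ), IsMaxCadetSeq T t v ∧ WindowInj v 1 t ∧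
      1 ≤ j ∧ j ≤ t ∧ v j = 0 ∧ ll < j ∧ j + lu ≤ t ∧
      IsMaxSCadetWindow S T t v (j - ll) (j + lu)}

/-- The complement in `ℝ^n` of the union of the hyperplanes `xᵢ - xⱼ = s`
(`i < j`, `s ∈ S i j`) of the arrangement `A_S`. -/
def complementSet {n : ℕ} (S : Fin n → Fin n → Finset ℤ) : Set (Fin n → ℝ) :=
  {x | ∀ i j : Fin n, i < j → ∀ s ∈ S i j, x i - x j ≠ (s : ℝ)}

/-- The number of regions `r_S` of the arrangement `A_S`: the number of connected
components of the complement of its hyperplanes. -/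
noncomputable def numRegions {n : ℕ} (S : Fin n → Fin n → Finset ℤ) : ℕ :=
  Nat.card (ConnectedComponents ↥(complementSet S))

/-- A rooted labeled plane tree with `n` nodes and arbitrary numbers of children:
`nchild u` is the total number of (linearly ordered) children of the node `u`, and
`pos v` the position of the node `v` among the children of its parent (so
`lsib v = pos v` and `rsib v = nchild (parent v) - 1 - pos v`). Children not occupied
by nodes are unlabeled leaves. -/
structure LPTree (n : ℕ) where
  root : Fin n
  parent : Fin n → Fin n
  pos : Fin n → ℕ
  nchild : Fin n → ℕ
  parent_root : parent root = root
  reaches_root : ∀ v : Fin n, ∃ k : ℕ, parent^[k] v = root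
  pos_lt : ∀ v : Fin n, v ≠ root → pos v < nchild (parent v)
  pos_inj : ∀ v w : Fin n, v ≠ root → w ≠ root → parent v = parent w → pos v = pos w → v = w

/-- Membership in the set `𝔗(S)`: the root is the node `1`, the node `1` has `2m+2`
children, every other node has exactly one child, and every node `k ≠ 1` satisfies
`lsib k ∈ S⁻₁ₖ` or `rsib k ∈ S⁻ₖ₁`. -/
def IsFrakT {n : ℕ} [NeZero n] (S : Fin n → Fin n → Finset ℤ) (T : LPTree n) : Prop :=
  T.root = 0 ∧ T.nchild 0 = 2 * mOf S + 2 ∧ (∀ v : Fin n, v ≠ 0 → T.nchild v = 1) ∧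
    ∀ v : Fin n, v ≠ 0 →
      (T.pos v ∈ Sminus S 0 v ∨ (T.nchild (T.parent v) - 1 - T.pos v) ∈ Sminus S v 0)

/-- For an `S`-connected cadet sequence `(v 1, …, v k)` whose maximal `S`-cadet
sequences are the windows `[a r, b r]` (`1 ≤ r ≤ k'`, in increasing order of last index),
`LastIdx a b k' j` is the index of the largest-indexed node of `X_j \ X_{j+1}`
(with `X_{k'+1} = {0}` containing no node of the sequence). -/
def LastIdx (a b : ℕ → ℕ) (k' j : ℕ) : ℕ :=
  ((Finset.Icc (a j) (b j)) \
    (if j = k' then (∅ : Finset ℕ) else Finset.Icc (a (j + 1)) (b (j + 1)))).sup id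

/-- `X_i` reaches `X_j`: the parent of the largest-indexed node of `X_j \ X_{j+1}`
belongs to `X_i`, with the conventions `X_0 = {0}`, `parent (v 1) = 0`
(the index `0` plays the role of `X_0`). -/
def Reaches (a b : ℕ → ℕ) (k' i j : ℕ) : Prop :=
  i < j ∧ j ≤ k' ∧
    ((i = 0 ∧ LastIdx a b k' j = 1) ∨
      (1 ≤ i ∧ 2 ≤ LastIdx a b k' j ∧ a i ≤ LastIdx a b k' j - 1 ∧
        LastIdx a b k' j - 1 ≤ b i))

/-- A successful run of the algorithm: `idx 0 = 0`; at each step, the next term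
`idx (j+1)` is the smallest-indexed maximal `S`-cadet sequence reached by `X_{idx j}`
but not reached by any `X_{idx l}` with `l < j`; the run terminates at `k'`
after `t` steps. -/
def AlgRun (a b : ℕ → ℕ) (k' t : ℕ) (idx : ℕ → ℕ) : Prop :=
  idx 0 = 0 ∧ idx t = k' ∧ (∀ j, j < t → idx j ≠ k') ∧
    ∀ j, j < t →
      Reaches a b k' (idx j) (idx (j + 1)) ∧
        (∀ l, l < j → ¬ Reaches a b k' (idx l) (idx (j + 1))) ∧
        ∀ r, r < idx (j + 1) → Reaches a b k' (idx j) r → ∃ l, l < j ∧ Reaches a b k' (idx l) r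

/-- Condition (2) of Proposition 4.5 (with lower 1-length `i` and upper 1-length `k`),
for the maximal cadet sequence `(v 1, …, v t)` containing the node `1 = v j`. -/
def Cond9 {n m : ℕ} (S : Fin n → Fin n → Finset ℤ) (T : PlaneTree n m)
    (t : ℕ) (v : ℕ → Fin n) (j i k : ℕ) : Prop :=
  i < j ∧ k ≤ t - j ∧
    (∀ s : ℕ, 1 ≤ s → s ≤ t → (s < j - i - 1 ∨ j + k + 1 < s) →
      IsMaxSCadetWindow S T t v s s) ∧
    IsMaxSCadetWindow S T t v (j - i) (j + k) ∧
    (j - i ≠ 1 → IsMaxSCadetWindow S T t v (j - i - 1) (j - 1)) ∧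
    (j - i = 1 → i = 0) ∧
    (j + k ≠ t → IsMaxSCadetWindow S T t v (j + 1) (j + k + 1)) ∧
    (j + k = t → k = 0) ∧
    ∀ a' b' : ℕ, IsMaxSCadetWindow S T t v a' b' →
      ((a' = b' ∧ (a' < j - i - 1 ∨ j + k + 1 < a')) ∨ (a' = j - i ∧ b' = j + k) ∨
        (j - i ≠ 1 ∧ a' = j - i - 1 ∧ b' = j - 1) ∨ (j + k ≠ t ∧ a' = j + 1 ∧ b' = j + k + 1))


/-! For `i ≥ 1`, a point `x` off the Ish arrangement has `x i` distinct from the `m + 1 = n`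
points `x 0 - k` (`k ≤ i`) and `x k` (`k > i`), which are themselves distinct; let `code x i`
be the number of them below `x i`, one of `n + 1` values. Going down from `i = m`, the sides of
all hyperplanes through `x i` are determined by `code x i` together with the sides already known
for larger indices, since those fix the relative order of the cut points of `i`; and every value
of `code x i` is realised by moving `x i` alone. Hence the sign vectors of points off the
arrangement correspond to `Fin m → Fin (m + 2)`, and the regions of any arrangement are its
nonempty sign cells, which are open and convex. -/

open Finset

theorem card_connectedComponents_eq_card_range {X β : Type*} [TopologicalSpace X] {f : X → β}
    (hf : IsLocallyConstant f) (hfib : ∀ b, IsPreconnected (f ⁻¹' {b})) :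
    Nat.card (ConnectedComponents X) = Nat.card (Set.range f) := by
  have hker : connectedComponentSetoid X = Setoid.ker f := by
    ext x y
    change connectedComponent x = connectedComponent y ↔ f x = f y
    refine ⟨fun h => hf.apply_eq_of_isPreconnected isPreconnected_connectedComponent
      mem_connectedComponent (h ▸ mem_connectedComponent), fun h => ?_⟩
    exact connectedComponent_eq ((hfib (f y)).subset_connectedComponent h rfl)
  unfold ConnectedComponents
  rw [hker]
  exact Nat.card_congr (Setoid.quotientKerEquivRange f)

theorem exists_notMem_card_filter_lt_eq {α : Type*} [LinearOrder α] [DenselyOrdered α]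
    [NoMinOrder α] [NoMaxOrder α] [Nonempty α] (K : Finset α) {k : ℕ} (hk : k ≤ #K) :
    ∃ t ∉ K, #{c ∈ K | c < t} = k := by
  -- the bound `u` keeps the point found for `K` below the new maximum in the inductive step
  suffices H : ∀ u, (∀ c ∈ K, c < u) → ∀ k ≤ #K, ∃ t < u, t ∉ K ∧ #{c ∈ K | c < t} = k by
    obtain ⟨M, hM⟩ := K.exists_le
    obtain ⟨u, hu⟩ := exists_gt M
    obtain ⟨t, -, ht⟩ := H u (fun c hc => (hM c hc).trans_lt hu) k hk
    exact ⟨t, ht⟩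
  clear hk k
  induction K using Finset.induction_on_max with
  | empty =>
    intro u _ k hk
    obtain ⟨t, ht⟩ := exists_lt u
    exact ⟨t, ht, notMem_empty t, by simp_all⟩
  | insert a K haK ih =>
    intro u hu k hk
    have haK' : a ∉ K := fun h => lt_irrefl a (haK a h)
    rw [card_insert_of_notMem haK'] at hk
    rcases hk.lt_or_eq with hk | rfl
    · obtain ⟨t, hta, htK, hcard⟩ := ih a haK k (by omega)
      refine ⟨t, hta.trans (hu a (mem_insert_self a K)), by simp [hta.ne, htK], ?_⟩
      rw [filter_insert, if_neg hta.not_gt, hcard]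
    · obtain ⟨t, hat, htu⟩ := exists_between (hu a (mem_insert_self a K))
      refine ⟨t, htu, ?_, ?_⟩
      · simp only [mem_insert, not_or]
        exact ⟨hat.ne', fun htK => lt_asymm hat (haK t htK)⟩
      · rw [filter_insert, if_pos hat, card_insert_of_notMem (by simp [haK']),
          filter_true_of_mem (fun c hc => (haK c hc).trans hat)]

theorem Fin.forall_ne_zero_iff_forall_succ {n : ℕ} {P : Fin (n + 1) → Prop} :
    (∀ i ≠ 0, P i) ↔ ∀ i : Fin n, P i.succ := by
  refine ⟨fun h i => h i.succ i.succ_ne_zero, fun h i hi => ?_⟩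
  obtain ⟨j, rfl⟩ := Fin.exists_succ_eq.2 hi
  exact h j

theorem lt_iff_card_filter_lt_lt {ι α : Type*} [Fintype ι] [LinearOrder α] (p : ι → α) (a : ι)
    (t : α) : p a < t ↔ #{b | p b < p a} < #{b | p b < t} := by
  constructor
  · intro hat
    refine card_lt_card ⟨monotone_filter_right _ fun b _ hb => hb.trans hat, fun h => ?_⟩
    exact lt_irrefl (p a) (mem_filter.1 (h (mem_filter.2 ⟨mem_univ a, hat⟩))).2
  · intro h
    by_contra hta
    exact h.not_ge
      (card_le_card (monotone_filter_right _ fun b _ hb => hb.trans_le (not_lt.1 hta)))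

section Arrangement

variable {E ι : Type*} [AddCommGroup E] [Module ℝ E] [TopologicalSpace E]
  (φ : ι → E →L[ℝ] ℝ) (c : ι → ℝ)

def signCell (x : E) : Set E :=
  ⋂ k, if φ k x < c k then {y | φ k y < c k} else {y | c k < φ k y}

variable {φ c}

theorem isOpen_signCell [Finite ι] (x : E) : IsOpen (signCell φ c x) := by
  refine isOpen_iInter_of_finite fun k => ?_
  split_ifs
  · exact isOpen_lt (φ k).continuous continuous_const
  · exact isOpen_lt continuous_const (φ k).continuous

theorem convex_signCell (x : E) : Convex ℝ (signCell φ c x) := by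
  refine convex_iInter fun k => ?_
  split_ifs
  · exact convex_halfSpace_lt (φ k).isLinear _
  · exact convex_halfSpace_gt (φ k).isLinear _

theorem mem_signCell_iff {x y : E} (hy : ∀ k, φ k y ≠ c k) :
    y ∈ signCell φ c x ↔ ∀ k, (φ k x < c k ↔ φ k y < c k) := by
  simp only [signCell, Set.mem_iInter]
  refine forall_congr' fun k => ?_
  split_ifs with h
  · simp [h]
  · simp only [Set.mem_ofPred_eq, h, false_iff, not_lt]
    exact ⟨le_of_lt, fun h' => lt_of_le_of_ne h' (hy k).symm⟩

theorem ne_of_mem_signCell {x y : E} (hy : y ∈ signCell φ c x) (k : ι) : φ k y ≠ c k := by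
  have := Set.mem_iInter.1 hy k
  split_ifs at this
  exacts [this.ne, this.ne']

theorem card_connectedComponents_eq_card_range_of_sides [Finite ι] [ContinuousAdd E]
    [ContinuousSMul ℝ E] {β : Type*} {U : Set E} (hU : ∀ x, x ∈ U ↔ ∀ k, φ k x ≠ c k) (f : U → β)
    (hf : ∀ x y : U, f x = f y ↔ ∀ k, (φ k x < c k ↔ φ k y < c k)) :
    Nat.card (ConnectedComponents U) = Nat.card (Set.range f) := by
  have hfiber : ∀ x : U, f ⁻¹' {f x} = Subtype.val ⁻¹' signCell φ c x := by
    intro x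
    ext y
    rw [Set.mem_preimage, Set.mem_singleton_iff, Set.mem_preimage,
      mem_signCell_iff ((hU y).1 y.2), ← hf, eq_comm]
  have hcell : ∀ x : U, signCell φ c x ⊆ U := fun x y hy => (hU y).2 (ne_of_mem_signCell hy)
  refine card_connectedComponents_eq_card_range ?_ fun b => ?_
  · refine IsLocallyConstant.iff_isOpen_fiber.2 fun b => ?_
    by_cases hb : b ∈ Set.range f
    · obtain ⟨x, rfl⟩ := hb
      rw [hfiber]
      exact (isOpen_signCell _).preimage continuous_subtype_val
    · rw [Set.preimage_singleton_eq_empty.2 hb]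
      exact isOpen_empty
  · by_cases hb : b ∈ Set.range f
    · obtain ⟨x, rfl⟩ := hb
      rw [hfiber, ← Topology.IsInducing.subtypeVal.isPreconnected_image,
        Subtype.image_preimage_coe, Set.inter_eq_right.2 (hcell x)]
      exact (convex_signCell _).isPreconnected
    · rw [Set.preimage_singleton_eq_empty.2 hb]
      exact isPreconnected_empty

end Arrangement

namespace Ish

variable {m : ℕ}

/-- With `Fin (m + 1)` indexing the coordinates `x₁, …, xₙ`, the cut points of `i` are where
the hyperplanes `x₁ - x_{i+1} = k` (`k ≤ i`) and `x_{i+1} = x_{k+1}` (`k > i`) meet the line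
along which only `x i` varies. -/
def cut (x : Fin (m + 1) → ℝ) (i k : Fin (m + 1)) : ℝ :=
  if k ≤ i then x 0 - (k : ℕ) else x k

noncomputable def code (x : Fin (m + 1) → ℝ) (i : Fin (m + 1)) : ℕ := #{k | cut x i k < x i}

def AvoidsCuts (x : Fin (m + 1) → ℝ) (i : Fin (m + 1)) : Prop := ∀ k, cut x i k ≠ x i

variable {x y : Fin (m + 1) → ℝ} {i j b k : Fin (m + 1)}

theorem cut_of_lt (h : i < k) : cut x i k = x k := if_neg h.not_ge

theorem cut_eq_cut_of_lt (hij : i < j) (hk : k ≤ i ∨ j < k) : cut x i k = cut x j k := by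
  rcases hk with hk | hk
  · rw [cut, cut, if_pos hk, if_pos (hk.trans hij.le)]
  · rw [cut_of_lt (hij.trans hk), cut_of_lt hk]

theorem cut_update_of_le (hi : i ≠ 0) (hij : i ≤ j) (t : ℝ) :
    cut (Function.update x i t) j = cut x j := by
  ext k
  unfold cut
  split_ifs with hk
  · rw [Function.update_of_ne hi.symm]
  · rw [Function.update_of_ne (by rintro rfl; exact hk hij)]

/-- In the last two cases `cut x i` agrees with `cut x b` (resp. `cut x k`) at the other index,
by `cut_eq_cut_of_lt`, so the comparison is one already made for the larger index. -/
theorem index_cases (i b k : Fin (m + 1)) :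
    (b ≤ i ∧ k ≤ i) ∨ b = k ∨ (i < b ∧ (k ≤ i ∨ b < k)) ∨ (i < k ∧ (b ≤ i ∨ k < b)) := by
  rcases le_or_gt b i with hb | hb <;> rcases le_or_gt k i with hk | hk <;>
    rcases lt_trichotomy b k with hbk | hbk | hbk <;> tauto

theorem cut_injective (hx : ∀ j, i < j → AvoidsCuts x j) : Function.Injective (cut x i) := by
  intro b k h
  rcases index_cases i b k with ⟨hb, hk⟩ | hbk | ⟨hib, hk⟩ | ⟨hik, hb⟩
  · rw [cut, cut, if_pos hb, if_pos hk, sub_right_inj, Nat.cast_inj] at h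
    exact Fin.ext h
  · exact hbk
  · rw [cut_of_lt hib, cut_eq_cut_of_lt hib hk] at h
    exact absurd h.symm (hx b hib k)
  · rw [cut_of_lt hik, cut_eq_cut_of_lt hik hb] at h
    exact absurd h (hx k hik b)

theorem cut_lt_cut_iff (hx : ∀ j, i < j → AvoidsCuts x j) (hy : ∀ j, i < j → AvoidsCuts y j)
    (hxy : ∀ j, i < j → ∀ k, (cut x j k < x j ↔ cut y j k < y j)) (b k : Fin (m + 1)) :
    cut x i b < cut x i k ↔ cut y i b < cut y i k := by
  rcases index_cases i b k with ⟨hb, hk⟩ | rfl | ⟨hib, hk⟩ | ⟨hik, hb⟩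
  · simp only [cut, if_pos hb, if_pos hk, sub_lt_sub_iff_left, Nat.cast_lt]
  · simp only [lt_irrefl]
  · rw [cut_of_lt hib, cut_of_lt hib, cut_eq_cut_of_lt hib hk, cut_eq_cut_of_lt hib hk,
      ← not_iff_not, not_lt, not_lt, (hx b hib k).le_iff_lt, (hy b hib k).le_iff_lt]
    exact hxy b hib k
  · rw [cut_of_lt hik, cut_of_lt hik, cut_eq_cut_of_lt hik hb, cut_eq_cut_of_lt hik hb]
    exact hxy k hik b

theorem cut_lt_iff_of_code_eq (hx : ∀ j, i < j → AvoidsCuts x j)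
    (hy : ∀ j, i < j → AvoidsCuts y j) (hxy : ∀ j, i < j → ∀ k, (cut x j k < x j ↔ cut y j k < y j))
    (hcode : code x i = code y i) (k : Fin (m + 1)) : cut x i k < x i ↔ cut y i k < y i := by
  have hrank : #{b | cut x i b < cut x i k} = #{b | cut y i b < cut y i k} := by
    simp only [cut_lt_cut_iff hx hy hxy]
  rw [lt_iff_card_filter_lt_lt, lt_iff_card_filter_lt_lt (cut y i), hrank]
  exact iff_of_eq (congrArg _ hcode)

theorem code_eq_iff (hx : ∀ i ≠ 0, AvoidsCuts x i) (hy : ∀ i ≠ 0, AvoidsCuts y i) :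
    (∀ i ≠ 0, code x i = code y i) ↔ ∀ i ≠ 0, ∀ k, (cut x i k < x i ↔ cut y i k < y i) := by
  refine ⟨fun hcode i => ?_, fun h i hi => congrArg card (filter_congr fun k _ => h i hi k)⟩
  induction i using WellFoundedGT.induction with
  | _ i ih =>
    intro hi
    have hpos : ∀ j, i < j → j ≠ 0 := fun j hij => (Fin.zero_le i |>.trans_lt hij).ne'
    exact cut_lt_iff_of_code_eq (fun j hij => hx j (hpos j hij)) (fun j hij => hy j (hpos j hij))
      (fun j hij => ih j hij (hpos j hij)) (hcode i hi)

theorem exists_cut_notMem_card_eq (hx : ∀ j, i < j → AvoidsCuts x j) {p : ℕ} (hp : p ≤ m + 1) :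
    ∃ t, (∀ k, cut x i k ≠ t) ∧ #{k | cut x i k < t} = p := by
  have hcard : #(univ.image (cut x i)) = m + 1 := by
    rw [card_image_of_injective _ (cut_injective hx), card_univ, Fintype.card_fin]
  obtain ⟨t, ht, htp⟩ := exists_notMem_card_filter_lt_eq (univ.image (cut x i)) (hcard ▸ hp)
  refine ⟨t, fun k hk => ht (mem_image.2 ⟨k, mem_univ k, hk⟩), ?_⟩
  rwa [filter_image, card_image_of_injective _ (cut_injective hx)] at htp

theorem exists_code_eq (g : Fin m → Fin (m + 2)) :
    ∃ x : Fin (m + 1) → ℝ, (∀ i ≠ 0, AvoidsCuts x i) ∧ ∀ i : Fin m, code x i.succ = g i := by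
  suffices H : ∀ i : Fin (m + 1), ∃ x : Fin (m + 1) → ℝ,
      ∀ j : Fin m, i < j.succ → AvoidsCuts x j.succ ∧ code x j.succ = g j by
    obtain ⟨x, hx⟩ := H 0
    exact ⟨x, Fin.forall_ne_zero_iff_forall_succ.2 fun j => (hx j (Fin.succ_pos j)).1,
      fun j => (hx j (Fin.succ_pos j)).2⟩
  intro i
  induction i using Fin.reverseInduction with
  | last => exact ⟨0, fun j hj => absurd hj (Fin.le_last _).not_gt⟩
  | cast i ih =>
    obtain ⟨x, hx⟩ := ih
    have hx' : ∀ j, i.succ < j → AvoidsCuts x j := by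
      intro j hij
      obtain ⟨j, rfl⟩ := Fin.exists_succ_eq.2 (Fin.succ_pos i |>.trans hij).ne'
      exact (hx j hij).1
    obtain ⟨t, ht, htg⟩ := exists_cut_notMem_card_eq hx' (Nat.lt_succ_iff.1 (g i).isLt)
    refine ⟨Function.update x i.succ t, fun j hij => ?_⟩
    rcases (Fin.castSucc_lt_succ_iff.1 hij).eq_or_lt with rfl | hij
    · simp only [AvoidsCuts, code, cut_update_of_le (Fin.succ_ne_zero _) le_rfl,
        Function.update_self]
      exact ⟨ht, htg⟩
    · have hij' : j.succ ≠ i.succ := (Fin.succ_lt_succ_iff.2 hij).ne'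
      simp only [AvoidsCuts, code, cut_update_of_le (Fin.succ_ne_zero i)
        (Fin.succ_lt_succ_iff.2 hij).le, Function.update_of_ne hij']
      exact hx j (Fin.succ_lt_succ_iff.2 hij)

noncomputable def ishS (n : ℕ) : Fin n → Fin n → Finset ℤ :=
  fun i j => if (i : ℕ) = 0 then Finset.Icc 0 ((j : ℕ) : ℤ) else {0}

theorem mem_complementSet_ishS_iff :
    x ∈ complementSet (ishS (m + 1)) ↔ ∀ i ≠ 0, AvoidsCuts x i := by
  constructor
  · intro hx i hi k
    unfold cut
    split_ifs with hk
    · have := hx 0 i (Fin.pos_iff_ne_zero.2 hi) k (by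
        simp only [ishS, Fin.val_zero, ↓reduceIte, Finset.mem_Icc]
        exact ⟨by positivity, by exact_mod_cast hk⟩)
      push_cast at this
      intro h
      exact this (by linarith)
    · have := hx i k (not_le.1 hk) 0 (by simp [ishS, hi])
      intro h
      exact this (by push_cast; linarith)
  · intro h i j hij s hs
    by_cases hi : (i : ℕ) = 0
    · have hi : i = 0 := Fin.ext hi
      subst hi
      simp only [ishS, Fin.val_zero, ↓reduceIte, Finset.mem_Icc] at hs
      have hsj : s.toNat < m + 1 := by omega
      have := h j hij.ne' ⟨s.toNat, hsj⟩
      rw [cut, if_pos (Fin.mk_le_of_le_val (by omega))] at this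
      have hs' : ((s.toNat : ℕ) : ℝ) = s := by exact_mod_cast Int.toNat_of_nonneg hs.1
      rw [hs'] at this
      intro h'
      exact this (by linarith)
    · simp only [ishS, if_neg hi, Finset.mem_singleton] at hs
      subst hs
      have := h i (Fin.val_ne_iff.1 hi) j
      rw [cut_of_lt hij] at this
      intro h'
      exact this (by push_cast at h'; linarith)

theorem code_le (x : Fin (m + 1) → ℝ) (i : Fin (m + 1)) : code x i ≤ m + 1 :=
  (card_filter_le _ _).trans (by rw [card_univ, Fintype.card_fin])

noncomputable def cutFunctional (i k : Fin (m + 1)) : (Fin (m + 1) → ℝ) →L[ℝ] ℝ :=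
  .proj (if k ≤ i then 0 else k) - .proj i

def cutOffset (i k : Fin (m + 1)) : ℝ := if k ≤ i then ((k : ℕ) : ℝ) else 0

theorem cutFunctional_lt_iff : cutFunctional i k x < cutOffset i k ↔ cut x i k < x i := by
  unfold cutFunctional cutOffset cut
  split_ifs <;> simp only [sub_apply, ContinuousLinearMap.proj_apply] <;>
    constructor <;> intro h <;> linarith

theorem cutFunctional_ne_iff : cutFunctional i k x ≠ cutOffset i k ↔ cut x i k ≠ x i := by
  unfold cutFunctional cutOffset cut
  split_ifs <;> simp only [sub_apply, ContinuousLinearMap.proj_apply] <;>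
    constructor <;> intro h h' <;> exact h (by linarith)

noncomputable def codeVec (x : complementSet (ishS (m + 1))) : Fin m → Fin (m + 2) :=
  fun i => ⟨code x i.succ, Nat.lt_succ_of_le (code_le _ _)⟩

theorem codeVec_eq_iff (x y : complementSet (ishS (m + 1))) :
    codeVec x = codeVec y ↔ ∀ p : Fin m × Fin (m + 1),
      (cutFunctional p.1.succ p.2 x < cutOffset p.1.succ p.2 ↔
        cutFunctional p.1.succ p.2 y < cutOffset p.1.succ p.2) := by
  have hcode := code_eq_iff (mem_complementSet_ishS_iff.1 x.2) (mem_complementSet_ishS_iff.1 y.2)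
  rw [Fin.forall_ne_zero_iff_forall_succ, Fin.forall_ne_zero_iff_forall_succ] at hcode
  simp only [funext_iff, codeVec, Fin.ext_iff, hcode, Prod.forall, cutFunctional_lt_iff]

theorem codeVec_surjective : Function.Surjective (codeVec (m := m)) := by
  intro g
  obtain ⟨x, hx, hcode⟩ := exists_code_eq g
  exact ⟨⟨x, mem_complementSet_ishS_iff.2 hx⟩, funext fun i => Fin.ext (hcode i)⟩

theorem numRegions_ishS (m : ℕ) : numRegions (ishS (m + 1)) = (m + 2) ^ m := by
  have hU : ∀ x, x ∈ complementSet (ishS (m + 1)) ↔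
      ∀ p : Fin m × Fin (m + 1), cutFunctional p.1.succ p.2 x ≠ cutOffset p.1.succ p.2 := by
    intro x
    rw [mem_complementSet_ishS_iff, Fin.forall_ne_zero_iff_forall_succ]
    simp only [Prod.forall, cutFunctional_ne_iff, AvoidsCuts]
  rw [numRegions, card_connectedComponents_eq_card_range_of_sides hU codeVec codeVec_eq_iff,
    Set.range_eq_univ.2 codeVec_surjective, Nat.card_univ, Nat.card_fun, Nat.card_fin,
    Nat.card_fin]

end Ish

/-- the number of regions of the `n`-dimensional Ish arrangement
(with `S_{1,j} = {0, 1, …, j-1}` and `S_{i,j} = {0}` for `1 < i < j`) is the Cayley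
number `(n+1)^(n-1)`. (The label `j` corresponds to the index `j - 1 : Fin n`, so
`S_{1,j} = Finset.Icc 0 (j-1)`.) -/
theorem statement_15 {n : ℕ} (hn : 1 ≤ n) :
    numRegions (fun i j : Fin n =>
      if (i : ℕ) = 0 then Finset.Icc (0 : ℤ) ((j : ℕ) : ℤ) else {0}) =
    (n + 1) ^ (n - 1) := by
  obtain ⟨m, rfl⟩ := Nat.exists_eq_add_of_le' hn
  exact Ish.numRegions_ishS m
end

section
/- Suppose the tuple S is transitive and let T ∈ T^(m)(n). Then no two distinct maximal S-cadet sequences of T intersect; that is, maximal S-cadet sequences and S-connected cadet sequences of T coincide. -/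
open scoped Classical

/-! Transitivity of `S` makes `S`-cadet sequences glue: if `(v_a, …, v_c)` and
`(v_c, …, v_b)` are `S`-cadet sequences then so is `(v_a, …, v_b)`, since for `i < c < j` the
sum of `lsib` over `(i, j]` splits at `c`. Hence two maximal `S`-cadet sequences inside the same
maximal cadet sequence that share a node coincide. As a node determines its maximal cadet
sequence and its position there, distinct maximal `S`-cadet sequences are disjoint, and the
minimal cadet sequences that are unions of maximal `S`-cadet sequences (the `S`-connected ones)
are the maximal `S`-cadet sequences themselves. -/

namespace PlaneTree

variable {n m : ℕ} (T : PlaneTree n m)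

theorem isCadet_unique {u v v' : Fin n} (h : T.IsCadet u v) (h' : T.IsCadet u v') : v = v' :=
  T.pos_inj v v' h.1.1 h'.1.1 (h.1.2.trans h'.1.2.symm) (le_antisymm (h'.2 v h.1) (h.2 v' h'.1))

theorem exists_isCadet_of_isChild {u c : Fin n} (hc : T.IsChild c u) : ∃ v, T.IsCadet u v := by
  obtain ⟨v, hv, hmax⟩ := Finset.exists_max_image (Finset.univ.filter fun w => T.IsChild w u)
    T.pos ⟨c, by simp [hc]⟩
  exact ⟨v, (Finset.mem_filter.1 hv).2, fun w hw => hmax w (by simp [hw])⟩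

theorem eq_root_of_iterate_parent_eq {x : Fin n} {j : ℕ} (hj : 0 < j)
    (h : T.parent^[j] x = x) : x = T.root := by
  obtain ⟨K, hK⟩ := T.reaches_root x
  have hper : Function.IsPeriodicPt T.parent (j * K) x :=
    Function.IsPeriodicPt.mul_const (f := T.parent) h K
  calc x = T.parent^[j * K] x := hper.eq.symm
    _ = T.parent^[j * K - K] (T.parent^[K] x) := by
      rw [← Function.iterate_add_apply, Nat.sub_add_cancel (Nat.le_mul_of_pos_left K hj)]
    _ = T.root := by rw [hK, Function.iterate_fixed T.parent_root]

end PlaneTree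

open Finset

section Windows

variable {n m : ℕ} {T : PlaneTree n m} {S : Fin n → Fin n → Finset ℤ} {v v' : ℕ → Fin n}
  {a b c k : ℕ}

theorem IsCadetWindow.mono {a' b' : ℕ} (h : IsCadetWindow T v a b) (ha : a ≤ a') (hab : a' ≤ b')
    (hb : b' ≤ b) : IsCadetWindow T v a' b' :=
  ⟨h.1.trans ha, hab, fun p hp hpb => h.2.2 p (by omega) (by omega)⟩

theorem IsCadetWindow.congr (h : IsCadetWindow T v a b) (hvv : Set.EqOn v v' (Set.Icc a b)) :
    IsCadetWindow T v' a b := by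
  refine ⟨h.1, h.2.1, fun p hp hpb => ?_⟩
  rw [← hvv ⟨hp.le, hpb⟩, ← hvv ⟨by omega, by omega⟩]
  exact h.2.2 p hp hpb

theorem IsCadetWindow.iterate_parent (h : IsCadetWindow T v a b) {p q : ℕ} (hap : a ≤ p)
    (hpq : p ≤ q) (hqb : q ≤ b) : T.parent^[q - p] (v q) = v p := by
  induction q, hpq using Nat.le_induction with
  | base => simp
  | succ q hpq ih =>
    have hpar : T.parent (v (q + 1)) = v q := (h.2.2 (q + 1) (by omega) hqb).1.2
    rw [show q + 1 - p = q - p + 1 by omega, Function.iterate_succ_apply, hpar]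
    exact ih (by omega)

/-- The parent map has no cycle. -/
theorem IsCadetWindow.apply_ne (h : IsCadetWindow T v a b) {p q : ℕ} (hap : a ≤ p) (hpq : p < q)
    (hqb : q ≤ b) : v p ≠ v q := fun he =>
  (h.2.2 q (by omega) hqb).1.1 <| T.eq_root_of_iterate_parent_eq (j := q - p) (by omega)
    (by rw [h.iterate_parent hap hpq.le hqb, he])

theorem IsCadetWindow.windowInj (h : IsCadetWindow T v a b) : WindowInj v a b := by
  intro p q hp hpb hq hqb he
  by_contra hne
  rcases Nat.lt_or_gt_of_ne hne with hlt | hlt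
  · exact h.apply_ne hp hlt hqb he
  · exact h.apply_ne hq hlt hpb he.symm

theorem IsCadetWindow.le_card (h : IsCadetWindow T v 1 k) : k ≤ n := by
  have := card_le_card_of_injOn v (s := Icc 1 k) (t := univ) (fun _ _ => mem_univ _)
    fun p hp q hq he => by
      simp only [coe_Icc, Set.mem_Icc] at hp hq
      exact h.windowInj p q hp.1 hp.2 hq.1 hq.2 he
  simpa using this

theorem IsCadetWindow.snoc {x : Fin n} (h : IsCadetWindow T v 1 k) (hx : T.IsCadet (v k) x) :
    IsCadetWindow T (fun p => if p = k + 1 then x else v p) 1 (k + 1) := by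
  refine ⟨le_rfl, by omega, fun p hp hpk => ?_⟩
  rcases Nat.lt_or_ge p (k + 1) with hlt | hge
  · simpa [show p ≠ k + 1 by omega, show p - 1 ≠ k + 1 by omega] using h.2.2 p hp (by omega)
  · simpa [show p = k + 1 by omega] using hx

theorem IsCadetWindow.cons {u : Fin n} (h : IsCadetWindow T v 1 k) (hu : T.IsCadet u (v 1)) :
    IsCadetWindow T (fun p => if p ≤ 1 then u else v (p - 1)) 1 (k + 1) := by
  refine ⟨le_rfl, by omega, fun p hp hpk => ?_⟩
  rcases Nat.lt_or_ge 2 p with hlt | hle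
  · simpa [show ¬p ≤ 1 by omega, show ¬p - 1 ≤ 1 by omega]
      using h.2.2 (p - 1) (by omega) (by omega)
  · simpa [show p = 2 by omega] using hu

theorem IsSCadetWindow.mono {a' b' : ℕ} (h : IsSCadetWindow S T v a b) (ha : a ≤ a')
    (hab : a' ≤ b') (hb : b' ≤ b) : IsSCadetWindow S T v a' b' :=
  ⟨h.1.mono ha hab hb, fun i j hi hij hj => h.2 i j (by omega) hij (by omega)⟩

theorem isSCadetWindow_self {p : ℕ} (hp : 1 ≤ p) : IsSCadetWindow S T v p p :=
  ⟨⟨hp, le_rfl, fun _ _ _ => by omega⟩, fun _ _ _ _ _ => by omega⟩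

theorem IsSCadetWindow.congr (h : IsSCadetWindow S T v a b) (hvv : Set.EqOn v v' (Set.Icc a b)) :
    IsSCadetWindow S T v' a b := by
  refine ⟨h.1.congr hvv, fun i j hi hij hj => ?_⟩
  have hsum : ∑ p ∈ Icc (i + 1) j, T.lsib (v p) = ∑ p ∈ Icc (i + 1) j, T.lsib (v' p) :=
    sum_congr rfl fun p hp => by
      rw [mem_Icc] at hp
      rw [hvv ⟨by omega, by omega⟩]
  rw [← hsum, ← hvv ⟨hi, by omega⟩, ← hvv ⟨by omega, hj⟩]
  exact h.2 i j hi hij hj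

theorem IsSCadetWindow.trans (hS : TransitiveS S) (h₁ : IsSCadetWindow S T v a c)
    (h₂ : IsSCadetWindow S T v c b) : IsSCadetWindow S T v a b := by
  have hac := h₁.1.2.1
  have hcb := h₂.1.2.1
  have hw : IsCadetWindow T v a b := ⟨h₁.1.1, hac.trans hcb, fun p hp hpb =>
    if hpc : p ≤ c then h₁.1.2.2 p hp hpc else h₂.1.2.2 p (by omega) hpb⟩
  refine ⟨hw, fun i j hi hij hj => ?_⟩
  rcases le_or_gt j c with hjc | hcj
  · exact h₁.2 i j hi hij hjc
  rcases le_or_gt c i with hci | hic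
  · exact h₂.2 i j hci hij hj
  rw [Icc_add_one_left_eq_Ioc, ← sum_Ioc_consecutive _ hic.le hcj.le, ← Icc_add_one_left_eq_Ioc,
    ← Icc_add_one_left_eq_Ioc]
  exact hS _ _ _ (hw.apply_ne hi hic (by omega)) (hw.apply_ne (by omega) hcj hj)
    (hw.apply_ne hi hij hj) _ _ (h₁.2 i c hi hic le_rfl) (h₂.2 c j le_rfl hcj hj)

theorem IsMaxSCadetWindow.bounds (h : IsMaxSCadetWindow S T k v a b) : 1 ≤ a ∧ a ≤ b ∧ b ≤ k :=
  ⟨h.2.1.1.1, h.2.1.1.2.1, h.1⟩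

theorem IsMaxSCadetWindow.congr (h : IsMaxSCadetWindow S T k v a b)
    (hvv : Set.EqOn v v' (Set.Icc 1 k)) : IsMaxSCadetWindow S T k v' a b := by
  obtain ⟨hbk, hw, hleft, hright⟩ := h
  refine ⟨hbk, hw.congr (hvv.mono (Set.Icc_subset_Icc hw.1.1 hbk)), ?_, ?_⟩
  · refine hleft.imp_right fun hne hw' => hne (hw'.congr ?_)
    exact hvv.symm.mono (Set.Icc_subset_Icc hw'.1.1 hbk)
  · rcases Nat.eq_or_lt_of_le hbk with hb | hb
    · exact Or.inl hb
    refine hright.imp_right fun hne hw' => hne (hw'.congr ?_)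
    exact hvv.symm.mono (Set.Icc_subset_Icc hw.1.1 hb)

theorem IsMaxSCadetWindow.le_left (hS : TransitiveS S) {a' b' : ℕ}
    (h : IsMaxSCadetWindow S T k v a b) (h' : IsMaxSCadetWindow S T k v a' b')
    (hc : c ∈ Set.Icc a b) (hc' : c ∈ Set.Icc a' b') : a ≤ a' := by
  by_contra! hlt
  obtain ⟨hac, hcb⟩ := hc
  obtain ⟨hac', hcb'⟩ := hc'
  have hglued : IsSCadetWindow S T v a' b :=
    (h'.2.1.mono le_rfl hac' hcb').trans hS (h.2.1.mono hac hcb le_rfl)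
  rcases h.2.2.1 with ha | hne
  · have := h'.bounds.1
    omega
  · exact hne (hglued.mono (by omega) (by omega) le_rfl)

theorem IsMaxSCadetWindow.le_right (hS : TransitiveS S) {a' b' : ℕ}
    (h : IsMaxSCadetWindow S T k v a b) (h' : IsMaxSCadetWindow S T k v a' b')
    (hc : c ∈ Set.Icc a b) (hc' : c ∈ Set.Icc a' b') : b' ≤ b := by
  by_contra! hlt
  obtain ⟨hac, hcb⟩ := hc
  obtain ⟨hac', hcb'⟩ := hc'
  have hglued : IsSCadetWindow S T v a b' :=
    (h.2.1.mono le_rfl hac hcb).trans hS (h'.2.1.mono hac' hcb' le_rfl)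
  rcases h.2.2.2 with hb | hne
  · have := h'.bounds.2.2
    omega
  · exact hne (hglued.mono le_rfl (by omega) (by omega))

theorem IsMaxSCadetWindow.eq_of_mem (hS : TransitiveS S) {a' b' : ℕ}
    (h : IsMaxSCadetWindow S T k v a b) (h' : IsMaxSCadetWindow S T k v a' b')
    (hc : c ∈ Set.Icc a b) (hc' : c ∈ Set.Icc a' b') : a = a' ∧ b = b' :=
  ⟨le_antisymm (h.le_left hS h' hc hc') (h'.le_left hS h hc' hc),
    le_antisymm (h'.le_right hS h hc' hc) (h.le_right hS h' hc hc')⟩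

theorem exists_isMaxSCadetWindow {p : ℕ} (hp : p ∈ Set.Icc 1 k) :
    ∃ a b, IsMaxSCadetWindow S T k v a b ∧ p ∈ Set.Icc a b := by
  set G := (Icc 1 p ×ˢ Icc p k).filter fun q => IsSCadetWindow S T v q.1 q.2
  have hmemG {a b : ℕ} : (a, b) ∈ G ↔ ((1 ≤ a ∧ a ≤ p) ∧ p ≤ b ∧ b ≤ k) ∧
      IsSCadetWindow S T v a b := by
    simp only [G, mem_filter, mem_product, mem_Icc]
  obtain ⟨⟨a, b⟩, hab, hmax⟩ := exists_max_image G (fun q => q.2 - q.1)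
    ⟨(p, p), hmemG.2 ⟨⟨⟨hp.1, le_rfl⟩, le_rfl, hp.2⟩, isSCadetWindow_self hp.1⟩⟩
  obtain ⟨⟨⟨ha, hap⟩, hpb, hbk⟩, hw⟩ := hmemG.1 hab
  refine ⟨a, b, ⟨hbk, hw, ?_, ?_⟩, hap, hpb⟩
  · refine (Nat.eq_or_lt_of_le ha).imp Eq.symm fun ha hw' => ?_
    have := hmax _ (hmemG.2 ⟨⟨⟨by omega, by omega⟩, hpb, hbk⟩, hw'⟩)
    simp only at this
    omega
  · refine (Nat.eq_or_lt_of_le hbk).imp id fun hb hw' => ?_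
    have := hmax _ (hmemG.2 ⟨⟨⟨ha, hap⟩, by omega, by omega⟩, hw'⟩)
    simp only at this
    omega

end Windows

section MaxCadetSeq

variable {n m : ℕ} {T : PlaneTree n m} {v v' : ℕ → Fin n} {k k' p q : ℕ}

theorem IsMaxCadetSeq.agree_before (h : IsMaxCadetSeq T k v) (h' : IsMaxCadetSeq T k' v')
    (hpk : p ≤ k) (hq1 : 1 ≤ q) (hqk : q ≤ k') (he : v p = v' q) :
    ∀ i < p, i < q ∧ v (p - i) = v' (q - i) := by
  intro i
  induction i with
  | zero => exact fun _ => ⟨hq1, he⟩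
  | succ i ih =>
    intro hip
    obtain ⟨hiq, hval⟩ := ih (by omega)
    have hcad : T.IsCadet (v (p - i - 1)) (v' (q - i)) :=
      hval ▸ h.1.2.2 (p - i) (by omega) (by omega)
    have hiq' : i + 1 < q := by
      by_contra!
      exact h'.2.2 _ (show q - i = 1 by omega ▸ hcad)
    have hcad' := h'.1.2.2 (q - i) (by omega) (by omega)
    exact ⟨hiq', hcad.1.2.symm.trans hcad'.1.2⟩

theorem IsMaxCadetSeq.agree_after (h : IsMaxCadetSeq T k v) (h' : IsMaxCadetSeq T k' v')
    (hp1 : 1 ≤ p) (hq1 : 1 ≤ q) (hqk : q ≤ k') (he : v p = v' q) :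
    ∀ i, p + i ≤ k → q + i ≤ k' ∧ v (p + i) = v' (q + i) := by
  intro i
  induction i with
  | zero => exact fun _ => ⟨hqk, he⟩
  | succ i ih =>
    intro hik
    obtain ⟨hiq, hval⟩ := ih (by omega)
    have hcad : T.IsCadet (v' (q + i)) (v (p + i + 1)) :=
      hval ▸ h.1.2.2 (p + i + 1) (by omega) (by omega)
    have hiq' : q + i < k' := by
      by_contra!
      exact h'.2.1 _ (show q + i = k' by omega ▸ hcad.1)
    exact ⟨hiq', T.isCadet_unique hcad (h'.1.2.2 (q + i + 1) (by omega) (by omega))⟩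

theorem IsMaxCadetSeq.eq_of_apply_eq (h : IsMaxCadetSeq T k v) (h' : IsMaxCadetSeq T k' v')
    (hp : p ∈ Set.Icc 1 k) (hq : q ∈ Set.Icc 1 k') (he : v p = v' q) :
    p = q ∧ k = k' ∧ Set.EqOn v v' (Set.Icc 1 k) := by
  obtain ⟨hp1, hpk⟩ := hp
  obtain ⟨hq1, hqk⟩ := hq
  obtain rfl : p = q := by
    have := (h.agree_before h' hpk hq1 hqk he (p - 1) (by omega)).1
    have := (h'.agree_before h hqk hp1 hpk he.symm (q - 1) (by omega)).1
    omega
  obtain rfl : k = k' := by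
    have := (h.agree_after h' hp1 hq1 hqk he (k - p) (by omega)).1
    have := (h'.agree_after h hq1 hp1 hpk he.symm (k' - p) (by omega)).1
    omega
  refine ⟨rfl, rfl, fun r ⟨hr1, hrk⟩ => ?_⟩
  rcases le_or_gt p r with hpr | hrp
  · simpa [Nat.add_sub_cancel' hpr] using
      (h.agree_after h' hp1 hq1 hqk he (r - p) (by omega)).2
  · simpa [Nat.sub_sub_self hrp.le] using
      (h.agree_before h' hpk hq1 hqk he (p - r) (by omega)).2

theorem exists_isMaxCadetSeq_apply_eq (T : PlaneTree n m) (x : Fin n) :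
    ∃ k v p, IsMaxCadetSeq T k v ∧ p ∈ Set.Icc 1 k ∧ v p = x := by
  set P : ℕ → Prop := fun k => ∃ v p, IsCadetWindow T v 1 k ∧ p ∈ Set.Icc 1 k ∧ v p = x
  have hP1 : P 1 :=
    ⟨fun _ => x, 1, ⟨le_rfl, le_rfl, fun _ _ _ => by omega⟩, ⟨le_rfl, le_rfl⟩, rfl⟩
  -- a longest cadet sequence through `x` extends at neither end, so it is maximal
  set k := Nat.findGreatest P n
  obtain ⟨v, p, hv, ⟨hp1, hpk⟩, hvp⟩ : P k :=
    Nat.findGreatest_spec (P := P) x.pos hP1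
  have hmax : ¬ P (k + 1) := fun hk =>
    Nat.findGreatest_is_greatest (lt_add_one k) (hk.choose_spec.choose_spec.1.le_card) hk
  refine ⟨k, v, p, ⟨hv, fun c hc => ?_, fun u hu => ?_⟩, ⟨hp1, hpk⟩, hvp⟩
  · obtain ⟨y, hy⟩ := T.exists_isCadet_of_isChild hc
    exact hmax ⟨_, p, hv.snoc hy, ⟨hp1, by omega⟩, by simpa [show p ≠ k + 1 by omega]⟩
  · exact hmax ⟨_, p + 1, hv.cons hu, ⟨by omega, by omega⟩, by simpa [show p ≠ 0 by omega]⟩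

end MaxCadetSeq

section MaxSCadetSet

variable {n m : ℕ} {T : PlaneTree n m} {S : Fin n → Fin n → Finset ℤ} {v : ℕ → Fin n}
  {X Y : Finset (Fin n)}

theorem IsCadetWindow.isCadetSeqSet {a b : ℕ} (h : IsCadetWindow T v a b) :
    IsCadetSeqSet T ((Icc a b).image v) := by
  obtain ⟨ha, hab, hcad⟩ := h
  have hshift : IsCadetWindow T (fun i => v (a + i - 1)) 1 (b + 1 - a) :=
    ⟨le_rfl, by omega, fun p hp hpb => by
      simpa [show a + (p - 1) - 1 = a + p - 1 - 1 by omega] using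
        hcad (a + p - 1) (by omega) (by omega)⟩
  refine ⟨b + 1 - a, _, hshift, hshift.windowInj, ?_⟩
  ext x
  simp only [mem_image, mem_Icc]
  constructor
  · rintro ⟨p, hp, rfl⟩
    exact ⟨p + 1 - a, by omega, by simp [show a + (p + 1 - a) - 1 = p by omega]⟩
  · rintro ⟨i, hi, rfl⟩
    exact ⟨a + i - 1, by omega, rfl⟩

theorem IsMaxSCadetSet.isCadetSeqSet (hY : IsMaxSCadetSet S T Y) : IsCadetSeqSet T Y := by
  obtain ⟨k, v, a, b, hv, -, hab, rfl⟩ := hY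
  obtain ⟨ha, hab, hbk⟩ := hab.bounds
  exact (hv.1.mono ha hab hbk).isCadetSeqSet

theorem IsMaxSCadetSet.eq_of_mem (hS : TransitiveS S) (hX : IsMaxSCadetSet S T X)
    (hY : IsMaxSCadetSet S T Y) {u : Fin n} (hX' : u ∈ X) (hY' : u ∈ Y) : X = Y := by
  obtain ⟨k, v, a, b, hv, -, hab, rfl⟩ := hX
  obtain ⟨k', v', a', b', hv', -, hab', rfl⟩ := hY
  obtain ⟨p, hp, rfl⟩ := mem_image.1 hX'
  obtain ⟨q, hq, hqp⟩ := mem_image.1 hY'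
  rw [mem_Icc] at hp hq
  obtain ⟨ha, -, hbk⟩ := hab.bounds
  obtain ⟨ha', -, hbk'⟩ := hab'.bounds
  obtain ⟨rfl, rfl, hvv⟩ :=
    hv.eq_of_apply_eq hv' ⟨by omega, by omega⟩ ⟨by omega, by omega⟩ hqp.symm
  obtain ⟨rfl, rfl⟩ := hab.eq_of_mem hS (hab'.congr hvv.symm) hp hq
  exact image_congr (coe_Icc a b ▸ hvv.mono (Set.Icc_subset_Icc ha hbk))

theorem IsMaxSCadetSet.inter_eq_empty_or_subset (hS : TransitiveS S) (hX : IsMaxSCadetSet S T X)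
    (hY : IsMaxSCadetSet S T Y) : X ∩ Y = ∅ ∨ Y ⊆ X := by
  rcases (X ∩ Y).eq_empty_or_nonempty with h | ⟨u, hu⟩
  · exact Or.inl h
  · exact Or.inr (hY.eq_of_mem hS hX (mem_inter.1 hu).2 (mem_inter.1 hu).1).le

theorem IsMaxSCadetSet.sConnected (hS : TransitiveS S) (hX : IsMaxSCadetSet S T X) :
    SConnected S T X := by
  refine ⟨hX.isCadetSeqSet, fun Y hY => hX.inter_eq_empty_or_subset hS hY, ?_⟩
  rintro X' ⟨k, v, hv, -, rfl⟩ hX' hsub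
  have hv1 : v 1 ∈ (Icc 1 k).image v := mem_image_of_mem v (mem_Icc.2 ⟨le_rfl, hv.2.1⟩)
  refine le_antisymm hsub ((hX' X hX).resolve_left fun h => ?_)
  exact notMem_empty _ (h ▸ mem_inter.2 ⟨hv1, hsub hv1⟩)

/-- The maximal `S`-cadet sequence through the first node of `X` lies in `X` and satisfies
condition (1) itself, so by the minimality condition (2) it is `X`. -/
theorem SConnected.isMaxSCadetSet (hS : TransitiveS S) (hX : SConnected S T X) :
    IsMaxSCadetSet S T X := by
  obtain ⟨⟨k, v, hv, -, rfl⟩, hdisj, hmin⟩ := hX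
  obtain ⟨t, w, p, hw, hp, hwp⟩ := exists_isMaxCadetSeq_apply_eq T (v 1)
  obtain ⟨a, b, hab, hap⟩ := exists_isMaxSCadetWindow (S := S) (v := w) hp
  have hY : IsMaxSCadetSet S T ((Icc a b).image w) := ⟨t, w, a, b, hw, hw.1.windowInj, hab, rfl⟩
  have hv1 : v 1 ∈ (Icc a b).image w := hwp ▸ mem_image_of_mem w (mem_Icc.2 hap)
  have hv1' : v 1 ∈ (Icc 1 k).image v := mem_image_of_mem v (mem_Icc.2 ⟨le_rfl, hv.2.1⟩)
  have hsub : (Icc a b).image w ⊆ (Icc 1 k).image v :=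
    (hdisj _ hY).resolve_left fun h => notMem_empty _ (h ▸ mem_inter.2 ⟨hv1', hv1⟩)
  rw [← hmin _ hY.isCadetSeqSet (fun Z hZ => hY.inter_eq_empty_or_subset hS hZ) hsub]
  exact hY

end MaxSCadetSet

/-- Remark 3.16: if `S` is transitive then no two distinct maximal
`S`-cadet sequences of a tree intersect, and maximal `S`-cadet sequences coincide with
`S`-connected cadet sequences. -/
theorem statement_18 {n : ℕ} (S : Fin n → Fin n → Finset ℤ) (hS : TransitiveS S)
    (T : PlaneTree n (mOf S)) :
    (∀ Y Y', IsMaxSCadetSet S T Y → IsMaxSCadetSet S T Y' → Y ≠ Y' → Y ∩ Y' = ∅) ∧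
    ∀ X, IsMaxSCadetSet S T X ↔ SConnected S T X :=
  ⟨fun _ _ hY hY' hne => eq_empty_of_forall_notMem fun _ hu =>
      hne (hY.eq_of_mem hS hY' (mem_inter.1 hu).1 (mem_inter.1 hu).2),
    fun _ => ⟨fun hX => hX.sConnected hS, fun hX => hX.isMaxSCadetSet hS⟩⟩
end
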